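/- arXiv:0903.0022 — 2 statements merged into one kernel-verified Lean document; each statement's English description precedes it below -/
import Mathlib

section
/- Let (ξ_i) be i.i.d. integrable random variables with Eξ_0 > 0 and let S(i) = ξ_1 + ⋯ + ξ_i. Let (e_i) be i.i.d. with E log⁺|e_0| < ∞. Then the series Σ_{i=1}^∞ e^{−S(i)} |e_i| converges almost surely. -/
/-!
By the strong law of large numbers `S(n) ≥ (m/2) n` eventually, where `m = Eξ₀ > 0`. Since
`log⁺|e₀|` is integrable, `∑ₙ P(log⁺|eₙ| > (m/4) n) < ∞`, so by Borel–Cantelli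
`|eₙ| ≤ exp((m/4) n)` eventually. Hence the terms are eventually bounded by `exp(-(m/4) n)`.
-/

open MeasureTheory ProbabilityTheory Filter Topology Finset Real

lemma eventually_mul_le_of_tendsto_div {s : ℕ → ℝ} {m c : ℝ}
    (hs : Tendsto (fun n : ℕ => s n / n) atTop (𝓝 m)) (hc : c < m) :
    ∀ᶠ n : ℕ in atTop, c * n ≤ s n := by
  filter_upwards [hs.eventually (eventually_gt_nhds hc), eventually_gt_atTop 0] with n hn hn₀
  exact ((lt_div_iff₀ (Nat.cast_pos.2 hn₀)).1 hn).le

lemma summable_exp_neg_mul_abs {s a : ℕ → ℝ} {c d : ℝ} (hdc : d < c)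
    (hs : ∀ᶠ n : ℕ in atTop, c * n ≤ s n) (ha : ∀ᶠ n : ℕ in atTop, log |a n| ≤ d * n) :
    Summable fun n => exp (-s n) * |a n| := by
  have hgeom : Summable fun n : ℕ => exp (-(c - d)) ^ n :=
    summable_geometric_of_lt_one (exp_nonneg _) (exp_lt_one_iff.2 (by linarith))
  refine hgeom.of_norm_bounded_eventually_nat ?_
  filter_upwards [hs, ha] with n hsn han
  rw [norm_mul, norm_abs_eq_norm, norm_of_nonneg (exp_nonneg _), Real.norm_eq_abs]
  calc exp (-s n) * |a n| ≤ exp (-(c * n)) * exp (d * n) := by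
        gcongr
        exact (le_exp_log _).trans (exp_le_exp.2 han)
    _ = exp (-(c - d)) ^ n := by
        rw [← exp_nat_mul, ← exp_add]
        ring_nf

lemma ae_eventually_le_mul_of_identDistrib {Ω : Type*} [MeasurableSpace Ω] {μ : Measure Ω}
    [IsProbabilityMeasure μ] {Y : ℕ → Ω → ℝ} (hint : Integrable (Y 0) μ)
    (hident : ∀ n, IdentDistrib (Y n) (Y 0) μ μ) {ε : ℝ} (hε : 0 < ε) :
    ∀ᵐ ω ∂μ, ∀ᶠ n : ℕ in atTop, Y n ω ≤ ε * n := by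
  let _ : MeasureSpace Ω := ⟨μ⟩
  have hfin : ∑' n : ℕ, μ {ω | |Y 0 ω| / ε ∈ Set.Ioi (n : ℝ)} < ⊤ :=
    tsum_prob_mem_Ioi_lt_top (hint.abs.div_const ε) fun ω => by positivity
  have hle : ∀ n : ℕ, μ {ω | ε * n < Y n ω} ≤ μ {ω | |Y 0 ω| / ε ∈ Set.Ioi (n : ℝ)} := by
    intro n
    calc μ {ω | ε * n < Y n ω} ≤ μ {ω | ε * n < |Y n ω|} :=
          measure_mono fun ω (hω : ε * n < Y n ω) => hω.trans_le (le_abs_self _)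
      _ = μ {ω | ε * n < |Y 0 ω|} :=
          ((hident n).comp measurable_abs).measure_mem_eq measurableSet_Ioi
      _ = μ {ω | |Y 0 ω| / ε ∈ Set.Ioi (n : ℝ)} := by
          simp only [Set.mem_Ioi, lt_div_iff₀ hε, mul_comm ε]
  filter_upwards [ae_eventually_notMem ((ENNReal.tsum_le_tsum hle).trans_lt hfin).ne]
    with ω hω
  exact hω.mono fun n hn => not_lt.1 hn

lemma sum_Icc_one_eq_sum_range {M : Type*} [AddCommMonoid M] (f : ℕ → M) (n : ℕ) :
    ∑ j ∈ Icc 1 n, f j = ∑ j ∈ range n, f (j + 1) := by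
  rw [range_eq_Ico, sum_Ico_add' f 0 n 1]
  rfl

lemma ae_tendsto_sum_Icc_one_div {Ω : Type*} [MeasurableSpace Ω] {μ : Measure Ω}
    {ξ : ℕ → Ω → ℝ} (hindep : iIndepFun ξ μ) (hident : ∀ i, IdentDistrib (ξ i) (ξ 0) μ μ)
    (hint : Integrable (ξ 0) μ) :
    ∀ᵐ ω ∂μ, Tendsto (fun n : ℕ => (∑ j ∈ Icc 1 n, ξ j ω) / n) atTop
      (𝓝 (∫ ω, ξ 0 ω ∂μ)) := by
  have hident' : ∀ i, IdentDistrib (ξ (i + 1)) (ξ 1) μ μ :=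
    fun i => (hident (i + 1)).trans (hident 1).symm
  have hslln := strong_law_ae_real (fun j => ξ (j + 1)) ((hident 1).integrable_iff.2 hint)
    (fun i j hij => (hindep.precomp (add_left_injective 1)).indepFun hij) hident'
  filter_upwards [hslln] with ω hω
  simp only [sum_Icc_one_eq_sum_range fun j => ξ j ω, ← (hident 1).integral_eq]
  exact hω

theorem stmt_7_general {Ω : Type*} [MeasurableSpace Ω] (μ : Measure Ω) [IsProbabilityMeasure μ]
    (ξ e : ℕ → Ω → ℝ)
    (hξindep : iIndepFun ξ μ)
    (hξident : ∀ i, IdentDistrib (ξ i) (ξ 0) μ μ)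
    (hξint : Integrable (ξ 0) μ) (hξmean : 0 < ∫ ω, ξ 0 ω ∂μ)
    (heident : ∀ i, IdentDistrib (e i) (e 0) μ μ)
    (helog : Integrable (fun ω => max (Real.log |e 0 ω|) 0) μ) :
    ∀ᵐ ω ∂μ, Summable (fun i : ℕ =>
      Real.exp (-(∑ j ∈ Finset.Icc 1 (i + 1), ξ j ω)) * |e (i + 1) ω|) := by
  set m := ∫ ω, ξ 0 ω ∂μ
  have hlog : ∀ᵐ ω ∂μ, ∀ᶠ n : ℕ in atTop, max (log |e n ω|) 0 ≤ m / 4 * n :=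
    ae_eventually_le_mul_of_identDistrib helog
      (fun n => (heident n).comp ((measurable_log.comp measurable_abs).max measurable_const))
      (by linarith)
  filter_upwards [ae_tendsto_sum_Icc_one_div hξindep hξident hξint, hlog] with ω hS he
  have hSlin : ∀ᶠ n : ℕ in atTop, m / 2 * n ≤ ∑ j ∈ Icc 1 n, ξ j ω :=
    eventually_mul_le_of_tendsto_div hS (by linarith)
  have helin : ∀ᶠ n : ℕ in atTop, log |e n ω| ≤ m / 4 * n :=
    he.mono fun n hn => (le_max_left _ _).trans hn
  exact (summable_nat_add_iff 1).2 (summable_exp_neg_mul_abs (by linarith) hSlin helin)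

theorem stmt_7 {Ω : Type*} [MeasurableSpace Ω] (μ : Measure Ω) [IsProbabilityMeasure μ]
    (ξ e : ℕ → Ω → ℝ)
    (hξmeas : ∀ i, Measurable (ξ i)) (hemeas : ∀ i, Measurable (e i))
    (hξindep : iIndepFun ξ μ)
    (hξident : ∀ i, IdentDistrib (ξ i) (ξ 0) μ μ)
    (hξint : Integrable (ξ 0) μ) (hξmean : 0 < ∫ ω, ξ 0 ω ∂μ)
    (heindep : iIndepFun e μ)
    (heident : ∀ i, IdentDistrib (e i) (e 0) μ μ)
    (helog : Integrable (fun ω => max (Real.log |e 0 ω|) 0) μ) :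
    ∀ᵐ ω ∂μ, Summable (fun i : ℕ =>
      Real.exp (-(∑ j ∈ Finset.Icc 1 (i + 1), ξ j ω)) * |e (i + 1) ω|) :=
  stmt_7_general μ ξ e hξindep hξident hξint hξmean heident helog
end

section
/- Let (W_i) be independent real random variables such that Σ_{i=1}^∞ P(W_i ≠ a_i) = ∞ for every real sequence (a_i), and suppose Σ W_i converges a.s. to a random variable Y. Then P(Y = c) = 0 for every constant c. -/
/-!
Suppose `P(Y = c) > 0`. Write `S n = ∑_{i < n} W i` and `T n = ∑_{i ≥ n} W i`, so that
`Y = S n + T n` with `T n` independent of `W 0, …, W (n-1)`. Then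
`P(Y = c | W 0, …, W (n-1)) = P(T n = c - S n ω)`, and by Lévy's upward theorem this tends to `1`
at almost every `ω` with `Y ω = c`. Fix such an `ω₀` and put `p n = P(T n = c - S n ω₀)` and
`a n = W n ω₀`. Since `T n = W n + T (n+1)` with independent summands,
`p n ≤ p (n+1) P(W n = a n) + (1 - p (n+1)) P(W n ≠ a n)`; as `p n → 1`, this forces
`∑ P(W n ≠ a n) < ∞`.
-/

open MeasureTheory ProbabilityTheory Filter Topology Finset

lemma measurable_measure_singleton (ν : Measure ℝ) [SFinite ν] :
    Measurable fun x : ℝ => ν {x} := by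
  convert measurable_measure_prodMk_left (ν := ν) (measurableSet_diagonal (α := ℝ)) using 3 with x
  ext y
  simp [eq_comm]

lemma summable_of_tendsto_one_of_le_mul_add_mul {p r : ℕ → ℝ} (hp : ∀ n, p n ≤ 1)
    (hr : ∀ n, 0 ≤ r n) (hrec : ∀ n, p n ≤ p (n + 1) * (1 - r n) + (1 - p (n + 1)) * r n)
    (hlim : Tendsto p atTop (𝓝 1)) : Summable r := by
  obtain ⟨N, hN⟩ :=
    eventually_atTop.1 (hlim.eventually (eventually_gt_nhds (by norm_num : (7 / 8 : ℝ) < 1)))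
  -- `hrec` says `p n ≤ p (n + 1) - (2 p (n + 1) - 1) r n`, and `2 p (n + 1) - 1 > 3 / 4` here.
  have hstep : ∀ n, r (N + n) ≤ 4 / 3 * (p (N + n + 1) - p (N + n)) := fun n => by
    nlinarith [hrec (N + n), hN (N + n + 1) (by omega), hr (N + n)]
  refine (summable_nat_add_iff N).1 (summable_of_sum_range_le (c := 4 / 3 * (1 - p N))
    (fun n => hr (n + N)) fun m => ?_)
  calc ∑ i ∈ range m, r (i + N) ≤ ∑ i ∈ range m, 4 / 3 * (p (N + (i + 1)) - p (N + i)) :=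
        sum_le_sum fun i _ => by rw [add_comm i N]; exact hstep i
    _ = 4 / 3 * (p (N + m) - p N) := by
        rw [← mul_sum, sum_range_sub (fun i => p (N + i))]; simp
    _ ≤ 4 / 3 * (1 - p N) := by linarith [hp (N + m)]

section Independence

variable {Ω : Type*} [MeasurableSpace Ω] {μ : Measure Ω}

lemma ProbabilityTheory.IndepFun.measureReal_add_eq_le [IsProbabilityMeasure μ] {X T : Ω → ℝ}
    (hX : Measurable X) (hT : Measurable T) (h : IndepFun X T μ) (a b : ℝ) :
    μ.real {ω | X ω + T ω = b} ≤ μ.real {ω | T ω = b - a} * (1 - μ.real {ω | X ω ≠ a})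
      + (1 - μ.real {ω | T ω = b - a}) * μ.real {ω | X ω ≠ a} := by
  have hsub : {ω | X ω + T ω = b} ⊆
      (X ⁻¹' {a} ∩ T ⁻¹' {b - a}) ∪ (X ⁻¹' {a}ᶜ ∩ T ⁻¹' {b - a}ᶜ) := by
    intro ω (hω : X ω + T ω = b)
    by_cases hXa : X ω = a
    · exact Or.inl ⟨hXa, show T ω = b - a by linarith⟩
    · exact Or.inr ⟨hXa, fun hTa : T ω = b - a => hXa (by linarith)⟩
  have hprod : ∀ s t : Set ℝ, MeasurableSet s → MeasurableSet t →
      μ.real (X ⁻¹' s ∩ T ⁻¹' t) = μ.real (X ⁻¹' s) * μ.real (T ⁻¹' t) := fun s t hs ht => by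
    simp only [measureReal_def, h.measure_inter_preimage_eq_mul s t hs ht, ENNReal.toReal_mul]
  have hsa := measurableSet_singleton a
  have hsb := measurableSet_singleton (b - a)
  have hXa : μ.real {ω | X ω ≠ a} = 1 - μ.real (X ⁻¹' {a}) := probReal_compl_eq_one_sub (hX hsa)
  calc μ.real {ω | X ω + T ω = b}
      ≤ μ.real (X ⁻¹' {a} ∩ T ⁻¹' {b - a}) + μ.real (X ⁻¹' {a}ᶜ ∩ T ⁻¹' {b - a}ᶜ) :=
        (measureReal_mono hsub).trans (measureReal_union_le _ _)
    _ = μ.real (T ⁻¹' {b - a}) * (1 - μ.real {ω | X ω ≠ a})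
          + (1 - μ.real (T ⁻¹' {b - a})) * μ.real {ω | X ω ≠ a} := by
        rw [hprod _ _ hsa hsb, hprod _ _ hsa.compl hsb.compl, Set.preimage_compl,
          Set.preimage_compl, probReal_compl_eq_one_sub (hX hsa),
          probReal_compl_eq_one_sub (hT hsb), hXa]
        ring

lemma ProbabilityTheory.IndepFun.measure_add_eq_inter_mem_eq_setLIntegral {α : Type*}
    {mα : MeasurableSpace α} [IsFiniteMeasure μ] {X : Ω → α} {T : Ω → ℝ} (hX : Measurable X)
    (hT : Measurable T) (h : IndepFun X T μ) {φ : α → ℝ} (hφ : Measurable φ) {s : Set α}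
    (hs : MeasurableSet s) (c : ℝ) :
    μ ({ω | φ (X ω) + T ω = c} ∩ X ⁻¹' s) = ∫⁻ x in s, μ.map T {c - φ x} ∂(μ.map X) := by
  have hE : MeasurableSet ({p : α × ℝ | φ p.1 + p.2 = c} ∩ Prod.fst ⁻¹' s) :=
    (measurableSet_eq_fun ((hφ.comp measurable_fst).add measurable_snd) measurable_const).inter
      (measurable_fst hs)
  have hpre : {ω | φ (X ω) + T ω = c} ∩ X ⁻¹' s
      = (fun ω => (X ω, T ω)) ⁻¹' ({p : α × ℝ | φ p.1 + p.2 = c} ∩ Prod.fst ⁻¹' s) := rfl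
  rw [hpre, ← Measure.map_apply (hX.prodMk hT) hE,
    (indepFun_iff_map_prod_eq_prod_map_map hX.aemeasurable hT.aemeasurable).1 h,
    Measure.prod_apply hE, ← lintegral_indicator hs]
  congr 1 with x
  by_cases hx : x ∈ s
  · rw [Set.indicator_of_mem hx]
    congr 1 with t
    simp [hx, eq_sub_iff_add_eq']
  · rw [Set.indicator_of_notMem hx]
    convert measure_empty (μ := μ.map T)
    ext t
    simp [hx]

end Independence

lemma condExp_indicator_add_eq_of_indep {Ω : Type*} {m mΩ : MeasurableSpace Ω} {μ : Measure Ω}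
    [IsProbabilityMeasure μ] (hm : m ≤ mΩ) {S T : Ω → ℝ} (hS : Measurable[m] S)
    (hT : Measurable T) (h : Indep m (MeasurableSpace.comap T inferInstance) μ) (c : ℝ) :
    μ[{ω | S ω + T ω = c}.indicator 1 | m] =ᵐ[μ] fun ω => (μ.map T).real {c - S ω} := by
  have : IsProbabilityMeasure (μ.map T) := Measure.isProbabilityMeasure_map hT.aemeasurable
  have hg : Measurable[m] fun ω => μ.map T {c - S ω} :=
    (measurable_measure_singleton _).comp (measurable_const.sub hS)
  have hE : MeasurableSet {ω | S ω + T ω = c} :=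
    measurableSet_eq_fun ((hS.mono hm le_rfl).add hT) measurable_const
  have hmeasure_inter (s : Set Ω) (hs : MeasurableSet[m] s) :
      μ ({ω | S ω + T ω = c} ∩ s) = ∫⁻ ω in s, μ.map T {c - S ω} ∂μ := by
    -- `id : Ω → (Ω, m)` is a random variable independent of `T`, and `S` is a function of it.
    have hid : @Measurable Ω Ω mΩ m id := measurable_id'' hm
    have hind : Indep (MeasurableSpace.comap id m) (MeasurableSpace.comap T inferInstance) μ := by
      rwa [MeasurableSpace.comap_id]
    calc μ ({ω | S ω + T ω = c} ∩ s)
        = ∫⁻ ω in s, μ.map T {c - S ω} ∂(@Measure.map Ω Ω mΩ m id μ) :=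
          IndepFun.measure_add_eq_inter_mem_eq_setLIntegral (mα := m) hid hT hind hS hs c
      _ = ∫⁻ ω in s, μ.map T {c - S ω} ∂μ :=
          @setLIntegral_map Ω Ω mΩ m μ _ id s hs hg hid
  refine (ae_eq_condExp_of_forall_setIntegral_eq hm ((integrable_const (1 : ℝ)).indicator hE)
    (fun s _ _ => (Integrable.of_bound (hg.mono hm le_rfl).ennreal_toReal.aestronglyMeasurable 1
      (ae_of_all _ fun ω => ?_)).integrableOn) (fun s hs _ => ?_)
    hg.ennreal_toReal.aestronglyMeasurable).symm
  · rw [Real.norm_of_nonneg ENNReal.toReal_nonneg]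
    exact measureReal_le_one
  · rw [integral_indicator_const _ hE, smul_eq_mul, mul_one, measureReal_restrict_apply hE,
      measureReal_def, hmeasure_inter s hs,
      integral_toReal (hg.mono hm le_rfl).aemeasurable (ae_of_all _ fun ω => measure_lt_top _ _)]

section RandomSeries

variable {Ω : Type*} {W : ℕ → Ω → ℝ}

-- A measurable version of `∑_{i ≥ n} W i`, equal to it wherever the series converges.
noncomputable def tailSum (W : ℕ → Ω → ℝ) (n : ℕ) (ω : Ω) : ℝ :=
  liminf (fun m => ∑ i ∈ Ico n m, W i ω) atTop

lemma sum_range_add_tailSum_of_tendsto {ω : Ω} {y : ℝ}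
    (h : Tendsto (fun n => ∑ i ∈ range n, W i ω) atTop (𝓝 y)) (n : ℕ) :
    ∑ i ∈ range n, W i ω + tailSum W n ω = y := by
  have : Tendsto (fun m => ∑ i ∈ Ico n m, W i ω) atTop (𝓝 (y - ∑ i ∈ range n, W i ω)) := by
    refine (h.sub_const _).congr' ?_
    filter_upwards [eventually_ge_atTop n] with m hm
    rw [Finset.sum_Ico_eq_sub _ hm]
  rw [tailSum, this.liminf_eq]
  ring

lemma tailSum_zero_eq_of_tendsto {ω : Ω} {y : ℝ}
    (h : Tendsto (fun n => ∑ i ∈ range n, W i ω) atTop (𝓝 y)) : tailSum W 0 ω = y := by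
  simpa using sum_range_add_tailSum_of_tendsto h 0

abbrev futureMeasurableSpace (W : ℕ → Ω → ℝ) (n : ℕ) : MeasurableSpace Ω :=
  ⨆ i ∈ Set.Ici n, MeasurableSpace.comap (W i) inferInstance

lemma measurable_tailSum_futureMeasurableSpace (n : ℕ) :
    Measurable[futureMeasurableSpace W n] (tailSum W n) :=
  Measurable.liminf fun _ => Finset.measurable_sum _ fun i hi =>
    (comap_measurable (W i)).mono
      (le_biSup (fun j => MeasurableSpace.comap (W j) inferInstance)
        (Set.mem_Ici.2 (mem_Ico.1 hi).1)) le_rfl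

variable [mΩ : MeasurableSpace Ω] {μ : Measure Ω}

def pastFiltration (W : ℕ → Ω → ℝ) (hW : ∀ i, Measurable (W i)) : Filtration ℕ mΩ where
  seq n := ⨆ i ∈ Set.Iio n, MeasurableSpace.comap (W i) inferInstance
  mono' _ _ hnm := biSup_mono fun _ hi => lt_of_lt_of_le hi hnm
  le' _ := iSup₂_le fun i _ => (hW i).comap_le

lemma comap_le_pastFiltration (hW : ∀ i, Measurable (W i)) {i n : ℕ} (h : i < n) :
    MeasurableSpace.comap (W i) inferInstance ≤ pastFiltration W hW n :=
  le_biSup (fun j => MeasurableSpace.comap (W j) inferInstance) (Set.mem_Iio.2 h)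

lemma measurable_sum_range_pastFiltration (hW : ∀ i, Measurable (W i)) (n : ℕ) :
    Measurable[pastFiltration W hW n] fun ω => ∑ i ∈ range n, W i ω :=
  Finset.measurable_sum _ fun i hi =>
    (comap_measurable (W i)).mono (comap_le_pastFiltration hW (mem_range.1 hi)) le_rfl

lemma futureMeasurableSpace_le (hW : ∀ i, Measurable (W i)) (n : ℕ) :
    futureMeasurableSpace W n ≤ mΩ :=
  iSup₂_le fun i _ => (hW i).comap_le

lemma measurable_tailSum (hW : ∀ i, Measurable (W i)) (n : ℕ) : Measurable (tailSum W n) :=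
  (measurable_tailSum_futureMeasurableSpace n).mono (futureMeasurableSpace_le hW n) le_rfl

lemma measurable_tailSum_zero_iSup (hW : ∀ i, Measurable (W i)) :
    Measurable[⨆ n, pastFiltration W hW n] (tailSum W 0) :=
  (measurable_tailSum_futureMeasurableSpace 0).mono (iSup₂_le fun i _ =>
    (comap_le_pastFiltration hW i.lt_succ_self).trans (le_iSup (pastFiltration W hW ·) (i + 1)))
    le_rfl

lemma indep_pastFiltration_futureMeasurableSpace (hW : ∀ i, Measurable (W i))
    (hindep : iIndepFun W μ) (n : ℕ) :
    Indep (pastFiltration W hW n) (futureMeasurableSpace W n) μ := by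
  have := indep_biSup_compl (fun i => (hW i).comap_le) hindep (Set.Iio n)
  rwa [Set.compl_Iio] at this

lemma tailSum_eq_add_tailSum_succ_ae
    (hconv : ∀ᵐ ω ∂μ, ∃ y, Tendsto (fun n => ∑ i ∈ range n, W i ω) atTop (𝓝 y)) (n : ℕ) :
    ∀ᵐ ω ∂μ, tailSum W n ω = W n ω + tailSum W (n + 1) ω := by
  filter_upwards [hconv] with ω ⟨y, hy⟩
  have h := (sum_range_add_tailSum_of_tendsto hy n).trans
    (sum_range_add_tailSum_of_tendsto hy (n + 1)).symm
  rw [sum_range_succ] at h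
  linarith

lemma measureReal_tailSum_eq_le [IsProbabilityMeasure μ] (hW : ∀ i, Measurable (W i))
    (hindep : iIndepFun W μ)
    (hconv : ∀ᵐ ω ∂μ, ∃ y, Tendsto (fun n => ∑ i ∈ range n, W i ω) atTop (𝓝 y)) (n : ℕ)
    (a b : ℝ) :
    μ.real {ω | tailSum W n ω = b} ≤
      μ.real {ω | tailSum W (n + 1) ω = b - a} * (1 - μ.real {ω | W n ω ≠ a})
        + (1 - μ.real {ω | tailSum W (n + 1) ω = b - a}) * μ.real {ω | W n ω ≠ a} := by
  have hind : IndepFun (W n) (tailSum W (n + 1)) μ :=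
    indep_of_indep_of_le_right (indep_of_indep_of_le_left
      (indep_pastFiltration_futureMeasurableSpace hW hindep (n + 1))
      (comap_le_pastFiltration hW n.lt_succ_self))
      (measurable_tailSum_futureMeasurableSpace (n + 1)).comap_le
  have hrec : {ω | tailSum W n ω = b} =ᵐ[μ] {ω | W n ω + tailSum W (n + 1) ω = b} := by
    filter_upwards [tailSum_eq_add_tailSum_succ_ae hconv n] with ω hω
    show (_ = b) = (_ = b)
    rw [hω]
  rw [measureReal_congr hrec]
  exact hind.measureReal_add_eq_le (hW n) (measurable_tailSum hW (n + 1)) a b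

lemma condExp_indicator_tailSum_zero_eq [IsProbabilityMeasure μ] (hW : ∀ i, Measurable (W i))
    (hindep : iIndepFun W μ)
    (hconv : ∀ᵐ ω ∂μ, ∃ y, Tendsto (fun n => ∑ i ∈ range n, W i ω) atTop (𝓝 y)) (c : ℝ)
    (n : ℕ) :
    μ[{ω | tailSum W 0 ω = c}.indicator 1 | pastFiltration W hW n] =ᵐ[μ]
      fun ω => μ.real {ω' | tailSum W n ω' = c - ∑ i ∈ range n, W i ω} := by
  have hsplit : {ω | tailSum W 0 ω = c} =ᵐ[μ] {ω | ∑ i ∈ range n, W i ω + tailSum W n ω = c} := by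
    filter_upwards [hconv] with ω ⟨y, hy⟩
    show (_ = c) = (_ = c)
    rw [tailSum_zero_eq_of_tendsto hy, sum_range_add_tailSum_of_tendsto hy n]
  filter_upwards [(condExp_congr_ae (indicator_ae_eq_of_ae_eq_set hsplit)).trans
    (condExp_indicator_add_eq_of_indep ((pastFiltration W hW).le n)
      (measurable_sum_range_pastFiltration hW n) (measurable_tailSum hW n)
      (indep_of_indep_of_le_right (indep_pastFiltration_futureMeasurableSpace hW hindep n)
        (measurable_tailSum_futureMeasurableSpace n).comap_le) c)] with ω hω
  exact hω.trans (map_measureReal_apply (measurable_tailSum hW n) (measurableSet_singleton _))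

lemma exists_tendsto_measureReal_tailSum_eq_one [IsProbabilityMeasure μ]
    (hW : ∀ i, Measurable (W i)) (hindep : iIndepFun W μ)
    (hconv : ∀ᵐ ω ∂μ, ∃ y, Tendsto (fun n => ∑ i ∈ range n, W i ω) atTop (𝓝 y)) {c : ℝ}
    (hc : μ {ω | tailSum W 0 ω = c} ≠ 0) :
    ∃ ω₀, Tendsto (fun n => μ.real {ω | tailSum W n ω = c - ∑ i ∈ range n, W i ω₀})
      atTop (𝓝 1) := by
  set ℱ := pastFiltration W hW
  set A := {ω | tailSum W 0 ω = c}
  have hA : MeasurableSet[⨆ n, ℱ n] A :=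
    measurable_tailSum_zero_iSup hW (measurableSet_singleton c)
  have hA₀ : MeasurableSet A := iSup_le ℱ.le A hA
  have hlevy := ((integrable_const (μ := μ) (1 : ℝ)).indicator hA₀).tendsto_ae_condExp (ℱ := ℱ)
    (stronglyMeasurable_const.indicator hA)
  have hgood : ∀ᵐ ω ∂μ, ω ∈ A →
      Tendsto (fun n => μ.real {ω' | tailSum W n ω' = c - ∑ i ∈ range n, W i ω})
        atTop (𝓝 1) := by
    filter_upwards [hlevy, ae_all_iff.2 (condExp_indicator_tailSum_zero_eq hW hindep hconv c)]
      with ω hω hcondExp hωA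
    rw [Set.indicator_of_mem hωA] at hω
    exact hω.congr hcondExp
  have : (ae (μ.restrict A)).NeBot := ae_neBot.2 (by rwa [Ne, Measure.restrict_eq_zero])
  obtain ⟨ω₀, hω₀A, hω₀⟩ := ((ae_restrict_mem hA₀).and (ae_restrict_of_ae hgood)).exists
  exact ⟨ω₀, hω₀ hω₀A⟩

end RandomSeries

theorem stmt_11 {Ω : Type*} [MeasurableSpace Ω] (μ : Measure Ω) [IsProbabilityMeasure μ]
    (W : ℕ → Ω → ℝ) (Y : Ω → ℝ)
    (hWmeas : ∀ i, Measurable (W i))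
    (hWindep : iIndepFun W μ)
    (hdiv : ∀ a : ℕ → ℝ, ∑' i : ℕ, μ {ω | W i ω ≠ a i} = ⊤)
    (hconv : ∀ᵐ ω ∂μ,
      Tendsto (fun n => ∑ i ∈ Finset.range n, W i ω) atTop (nhds (Y ω))) :
    ∀ c : ℝ, μ {ω | Y ω = c} = 0 := by
  intro c
  by_contra hc
  have hconv' : ∀ᵐ ω ∂μ, ∃ y, Tendsto (fun n => ∑ i ∈ range n, W i ω) atTop (𝓝 y) :=
    hconv.mono fun ω h => ⟨Y ω, h⟩
  have hYZ : {ω | Y ω = c} =ᵐ[μ] {ω | tailSum W 0 ω = c} := by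
    filter_upwards [hconv] with ω h
    show (_ = c) = (_ = c)
    rw [tailSum_zero_eq_of_tendsto h]
  obtain ⟨ω₀, hω₀⟩ := exists_tendsto_measureReal_tailSum_eq_one hWmeas hWindep hconv'
    (by rwa [← measure_congr hYZ])
  have hsum : Summable fun n => μ.real {ω | W n ω ≠ W n ω₀} := by
    refine summable_of_tendsto_one_of_le_mul_add_mul (fun n => measureReal_le_one)
      (fun n => measureReal_nonneg) (fun n => ?_) hω₀
    have h := measureReal_tailSum_eq_le hWmeas hWindep hconv' n (W n ω₀)
      (c - ∑ i ∈ range n, W i ω₀)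
    rwa [sub_sub, ← sum_range_succ] at h
  refine hsum.tsum_ofReal_ne_top ?_
  convert hdiv fun n => W n ω₀ using 3 with n
  exact ofReal_measureReal
end
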